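/- arXiv:1204.2176 — 2 statements merged into one kernel-verified Lean document; each statement's English description precedes it below -/
import Mathlib

section
/- For all θ, ω, x ∈ ℝ one has S(−θ, −ω, x) = exp(−4πω)·S(θ, ω, x) and Z(−ω, x) = exp(−4πω)·Z(ω, x). Consequently the stationary density satisfies the even symmetry q(−θ, −ω) = q(θ, ω) for all θ ∈ ℝ and ω ∈ {−ω₀, ω₀}, and its θ-derivative is odd: ∂θq(−θ, −ω) = −∂θq(θ, ω). -/
noncomputable section

open MeasureTheory

/-- `G u ω x = x·cos u + 2ωu`. -/
def G (u ω x : ℝ) : ℝ := x * Real.cos u + 2 * ω * u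

/-- The unnormalized stationary profile `S(θ, ω, x)`. -/
def S (θ ω x : ℝ) : ℝ :=
  Real.exp (G θ ω x) *
    ((1 - Real.exp (4 * Real.pi * ω)) * (∫ u in (0:ℝ)..θ, Real.exp (-(G u ω x))) +
      Real.exp (4 * Real.pi * ω) * (∫ u in (0:ℝ)..(2 * Real.pi), Real.exp (-(G u ω x))))

/-- The normalization constant `Z(ω, x)`. -/
def Z (ω x : ℝ) : ℝ := ∫ θ in (0:ℝ)..(2 * Real.pi), S θ ω x

/-- `Ψ_μ` for the binary disorder law `μ = (1/2)(δ_{-ω₀} + δ_{ω₀})`. -/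
def psiMu (ω₀ x : ℝ) : ℝ :=
  (1 / 2) * ((∫ θ in (0:ℝ)..(2 * Real.pi), Real.cos θ * S θ (-ω₀) x) / Z (-ω₀) x +
    (∫ θ in (0:ℝ)..(2 * Real.pi), Real.cos θ * S θ ω₀ x) / Z ω₀ x)

/-- The stationary density `q(θ, ω) = S(θ, ω, 2Kr)/Z(ω, 2Kr)`. -/
def q (K r θ ω : ℝ) : ℝ := S θ ω (2 * K * r) / Z ω (2 * K * r)

/-- `κ(ω) = (1 − exp(4πω))/(2 Z(ω, 2Kr))`. -/
def kap (K r ω : ℝ) : ℝ := (1 - Real.exp (4 * Real.pi * ω)) / (2 * Z ω (2 * K * r))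

/-- The averaged convolution `⟨J∗h⟩_μ(θ)` for binary disorder. -/
def Jconv (K ω₀ : ℝ) (h : ℝ → ℝ → ℝ) (θ : ℝ) : ℝ :=
  -(K / 2) * ((∫ φ in (0:ℝ)..(2 * Real.pi), Real.sin φ * h (θ - φ) (-ω₀)) +
    (∫ φ in (0:ℝ)..(2 * Real.pi), Real.sin φ * h (θ - φ) ω₀))

/-- The linearized evolution operator `L` around the stationary density `q`. -/
def Lop (K ω₀ r : ℝ) (h : ℝ → ℝ → ℝ) (θ ω : ℝ) : ℝ :=
  (1 / 2) * deriv (deriv (fun u => h u ω)) θ -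
    deriv (fun u => h u ω * (Jconv K ω₀ (q K r) u + ω) + q K r u ω * Jconv K ω₀ h u) θ

/-! With `f u = exp (-G u ω x)` one has `f (u + 2π) = exp (-4πω) f u`, so the two terms defining
`S` combine into the single integral `S θ = exp (G θ) ∫_{θ-2π}^{θ} f` over a window of length
`2π`. In this form the reflection `(θ, ω) ↦ (-θ, -ω)`, which fixes `G`, moves the window to
`[θ, θ + 2π]`, costing the factor `exp (-4πω)`; the same computation shows that `S` is
`2π`-periodic in `θ`, so integrating over a period gives the relation for `Z`. -/

open Real

lemma G_neg_neg (u ω x : ℝ) : G (-u) (-ω) x = G u ω x := by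
  simp only [G, cos_neg]; ring

lemma G_add_two_pi (u ω x : ℝ) : G (u + 2 * π) ω x = G u ω x + 4 * π * ω := by
  simp only [G, cos_add_two_pi]; ring

lemma continuous_exp_neg_G (ω x : ℝ) : Continuous fun u => exp (-G u ω x) := by
  unfold G; fun_prop

lemma integral_exp_neg_G_add_two_pi (a b ω x : ℝ) :
    ∫ u in (a + 2 * π)..(b + 2 * π), exp (-G u ω x) =
      exp (-(4 * π * ω)) * ∫ u in a..b, exp (-G u ω x) := by
  rw [← intervalIntegral.integral_comp_add_right, ← intervalIntegral.integral_const_mul]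
  congr 1 with u
  rw [G_add_two_pi, ← exp_add]; ring_nf

lemma integral_exp_neg_G_neg (a b ω x : ℝ) :
    ∫ u in (-b)..(-a), exp (-G u (-ω) x) = ∫ u in a..b, exp (-G u ω x) := by
  rw [← intervalIntegral.integral_comp_neg]
  simp only [G_neg_neg]

lemma integral_exp_neg_G_next_period (θ ω x : ℝ) :
    ∫ u in θ..(θ + 2 * π), exp (-G u ω x) =
      exp (-(4 * π * ω)) * ∫ u in (θ - 2 * π)..θ, exp (-G u ω x) := by
  simpa only [sub_add_cancel] using integral_exp_neg_G_add_two_pi (θ - 2 * π) θ ω x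

lemma exp_four_pi_mul_cancel (ω : ℝ) : exp (4 * π * ω) * exp (-(4 * π * ω)) = 1 := by
  rw [← exp_add, add_neg_cancel, exp_zero]

lemma S_eq_exp_mul_integral (θ ω x : ℝ) :
    S θ ω x = exp (G θ ω x) * ∫ u in (θ - 2 * π)..θ, exp (-G u ω x) := by
  have hint (a b : ℝ) := (continuous_exp_neg_G ω x).intervalIntegrable (μ := volume) a b
  have hsplit : ∫ u in (θ - 2 * π)..θ, exp (-G u ω x) =
      (∫ u in (θ - 2 * π)..0, exp (-G u ω x)) + ∫ u in (0 : ℝ)..θ, exp (-G u ω x) :=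
    (intervalIntegral.integral_add_adjacent_intervals (hint _ _) (hint _ _)).symm
  have htail : ∫ u in θ..(2 * π), exp (-G u ω x) =
      (∫ u in (0 : ℝ)..(2 * π), exp (-G u ω x)) - ∫ u in (0 : ℝ)..θ, exp (-G u ω x) :=
    (intervalIntegral.integral_interval_sub_left (hint _ _) (hint _ _)).symm
  have hshift := integral_exp_neg_G_add_two_pi (θ - 2 * π) 0 ω x
  rw [sub_add_cancel, zero_add] at hshift
  rw [S, hsplit]
  linear_combination exp (G θ ω x) * (exp (4 * π * ω) * (hshift - htail) +
    (∫ u in (θ - 2 * π)..0, exp (-G u ω x)) * exp_four_pi_mul_cancel ω)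

theorem S_neg_neg (θ ω x : ℝ) : S (-θ) (-ω) x = exp (-(4 * π * ω)) * S θ ω x := by
  rw [S_eq_exp_mul_integral, S_eq_exp_mul_integral, G_neg_neg, ← neg_add',
    integral_exp_neg_G_neg, integral_exp_neg_G_next_period]
  ring

theorem S_periodic (ω x : ℝ) : Function.Periodic (fun θ => S θ ω x) (2 * π) := fun θ => by
  show S (θ + 2 * π) ω x = S θ ω x
  rw [S_eq_exp_mul_integral, S_eq_exp_mul_integral, add_sub_cancel_right, G_add_two_pi,
    integral_exp_neg_G_next_period, exp_add]
  linear_combination exp (G θ ω x) * (∫ u in (θ - 2 * π)..θ, exp (-G u ω x)) *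
    exp_four_pi_mul_cancel ω

theorem Z_neg (ω x : ℝ) : Z (-ω) x = exp (-(4 * π * ω)) * Z ω x := by
  have hreflect : ∫ θ in (0 : ℝ)..(2 * π), S (-θ) ω x = Z ω x := by
    have hperiod := (S_periodic ω x).intervalIntegral_add_eq (-(2 * π)) 0
    rw [neg_add_cancel, zero_add] at hperiod
    rw [intervalIntegral.integral_comp_neg (fun θ => S θ ω x), neg_zero, Z, hperiod]
  rw [Z, ← hreflect, ← intervalIntegral.integral_const_mul]
  congr 1 with θ
  rw [← S_neg_neg, neg_neg]

theorem q_neg_neg (K r θ ω : ℝ) : q K r (-θ) (-ω) = q K r θ ω := by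
  rw [q, q, S_neg_neg, Z_neg, mul_div_mul_left _ _ (exp_ne_zero _)]

theorem deriv_q_neg_neg (K r θ ω : ℝ) :
    deriv (fun u => q K r u (-ω)) (-θ) = -deriv (fun u => q K r u ω) θ := by
  have hq : (fun u => q K r u (-ω)) = fun u => q K r (-u) ω := funext fun u => by
    rw [← q_neg_neg, neg_neg]
  rw [hq, deriv_comp_neg (f := fun u => q K r u ω), neg_neg]

theorem stmt1_general (K ω₀ r : ℝ) :
    (∀ θ ω x : ℝ, S (-θ) (-ω) x = Real.exp (-(4 * Real.pi * ω)) * S θ ω x) ∧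
      (∀ ω x : ℝ, Z (-ω) x = Real.exp (-(4 * Real.pi * ω)) * Z ω x) ∧
      (∀ θ : ℝ, ∀ ω ∈ ({-ω₀, ω₀} : Set ℝ), q K r (-θ) (-ω) = q K r θ ω) ∧
      ∀ θ : ℝ, ∀ ω ∈ ({-ω₀, ω₀} : Set ℝ),
        deriv (fun u => q K r u (-ω)) (-θ) = -deriv (fun u => q K r u ω) θ :=
  ⟨S_neg_neg, Z_neg, fun θ ω _ => q_neg_neg K r θ ω, fun θ ω _ => deriv_q_neg_neg K r θ ω⟩

/-- Symmetry relations for `S` and `Z`, even symmetry of the stationary density `q`, and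
oddness of its `θ`-derivative. -/
theorem stmt1 (K ω₀ r : ℝ) (hK : 0 < K) (hω₀ : 0 < ω₀) (hr : 0 < r) :
    (∀ θ ω x : ℝ, S (-θ) (-ω) x = Real.exp (-(4 * Real.pi * ω)) * S θ ω x) ∧
      (∀ ω x : ℝ, Z (-ω) x = Real.exp (-(4 * Real.pi * ω)) * Z ω x) ∧
      (∀ θ : ℝ, ∀ ω ∈ ({-ω₀, ω₀} : Set ℝ), q K r (-θ) (-ω) = q K r θ ω) ∧
      ∀ θ : ℝ, ∀ ω ∈ ({-ω₀, ω₀} : Set ℝ),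
        deriv (fun u => q K r u (-ω)) (-θ) = -deriv (fun u => q K r u ω) θ :=
  stmt1_general K ω₀ r
end
end

section
/- Define B(θ, ω) = −2·(K·r·(cos(θ) − 1) + ωθ), p₂(θ, ω) = exp(−B(θ, ω))/(1 − exp(4πω))·∫₀^{2π} exp(B(u, ω) + 4πω) du + ∫₀^θ exp(B(u, ω) − B(θ, ω)) du, and e(θ, ω) = −∂θq(θ, ω)·cos(θ) + q(θ, ω)·sin(θ). Then for each ω ∈ {−ω₀, ω₀} the function θ ↦ p₂(θ, ω) is 2π-periodic and smooth, and there exists a constant c ≠ 0 such that Lp₂(θ, ω) = c·e(θ, ω) for all θ ∈ ℝ and ω ∈ {−ω₀, ω₀}. -/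
noncomputable section

open MeasureTheory

/-- The exponent appearing in the explicit formula. -/
def Bf (K r θ ω : ℝ) : ℝ := -2 * (K * r * (Real.cos θ - 1) + ω * θ)

/-- The explicit function answering the Riesz-representation of the sine functional. -/
def p2 (K r : ℝ) (θ ω : ℝ) : ℝ :=
  Real.exp (-Bf K r θ ω) / (1 - Real.exp (4 * Real.pi * ω)) *
      (∫ u in (0:ℝ)..(2 * Real.pi), Real.exp (Bf K r u ω + 4 * Real.pi * ω)) +
    ∫ u in (0:ℝ)..θ, Real.exp (Bf K r u ω - Bf K r θ ω)

/-- The function `e`. -/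
def eFun (K r : ℝ) (θ ω : ℝ) : ℝ :=
  -(deriv (fun u => q K r u ω) θ) * Real.cos θ + q K r θ ω * Real.sin θ

/-!
The profile `p2 = exp(-B) · (C + ∫₀^θ exp B)` solves the first-order equation
`p2' = 2 (ω - K r sin θ) p2 + 1`; the constant `C` is the one that makes it `2π`-periodic, and then
`S(·, ω, 2Kr) = (1 - e^{4πω}) p2`, so `q` is a multiple of `p2`. The reflection `θ ↦ -θ, ω ↦ -ω`
gives `p2(-θ, -ω) = -p2(θ, ω)`; with it and the self-consistency equation `r = Ψ_μ(2Kr)` the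
convolutions are `⟨J∗q⟩ = -K r sin` and `⟨J∗p2⟩ = c cos` with `c = K ∫ sin · p2(·, ω₀)`. By the
equation for `p2`, the drift `p2 (⟨J∗q⟩ + ω)` is `(p2' - 1) / 2` and cancels the diffusion term,
leaving `L p2 = -c (q cos)' = c e`.

For `c ≠ 0`, integrating the equation over a period gives `K r ∫ sin · p2 = ω ∫ p2 + π`. For
`ω > 0` we have `p2 < 0`, and integrating `(log |p2|)' = 2 (ω - K r sin) + 1 / p2` gives
`∫ 1 / p2 = -4πω`. Then `∫ (p2 + 1/(2ω))² / (-p2) > 0`, which holds strictly because `p2` is not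
constant, expands to `ω ∫ p2 < -π`.
-/

open Real Function

theorem Function.Periodic.intervalIntegral_comp_neg {f : ℝ → ℝ} {T : ℝ} (hf : Periodic f T) :
    ∫ x in (0:ℝ)..T, f (-x) = ∫ x in (0:ℝ)..T, f x := by
  have h := hf.intervalIntegral_add_eq (-T) 0
  rwa [neg_add_cancel, zero_add, ← neg_zero, ← intervalIntegral.integral_comp_neg, neg_zero] at h

theorem Function.Periodic.intervalIntegral_sin_mul_comp_sub {f : ℝ → ℝ} (hf : Periodic f (2 * π))
    (hc : Continuous f) (u : ℝ) :
    ∫ φ in (0:ℝ)..(2 * π), sin φ * f (u - φ) =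
      sin u * (∫ v in (0:ℝ)..(2 * π), cos v * f v) -
        cos u * ∫ v in (0:ℝ)..(2 * π), sin v * f v := by
  have hper : Periodic (fun v => sin (u - v) * f v) (2 * π) := fun v => by
    simp only [sub_add_eq_sub_sub, sin_sub_two_pi, hf v]
  have hsubst := intervalIntegral.integral_comp_sub_left (a := 0) (b := 2 * π)
    (fun v => sin (u - v) * f v) u
  simp only [sub_sub_cancel, sub_zero] at hsubst
  calc ∫ φ in (0:ℝ)..(2 * π), sin φ * f (u - φ)
      = ∫ v in (u - 2 * π)..(u - 2 * π + 2 * π), sin (u - v) * f v := by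
        rw [hsubst, sub_add_cancel]
    _ = ∫ v in (0:ℝ)..(2 * π), (sin u * (cos v * f v) - cos u * (sin v * f v)) := by
        rw [hper.intervalIntegral_add_eq, zero_add]
        exact intervalIntegral.integral_congr fun v _ => by simp only [sin_sub]; ring
    _ = _ := by
        rw [intervalIntegral.integral_sub, intervalIntegral.integral_const_mul,
          intervalIntegral.integral_const_mul] <;>
          exact (by fun_prop : Continuous _).intervalIntegrable _ _

lemma one_sub_exp_four_pi_mul_ne_zero {ω : ℝ} (hω : ω ≠ 0) : 1 - exp (4 * π * ω) ≠ 0 := by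
  rw [sub_ne_zero, ne_comm, Ne, exp_eq_one_iff]
  exact mul_ne_zero (by positivity) hω

def primitiveExpBf (K r ω θ : ℝ) : ℝ := ∫ u in (0:ℝ)..θ, exp (Bf K r u ω)

section Profile

variable (K r : ℝ)

lemma Bf_add_two_pi (ω u : ℝ) : Bf K r (u + 2 * π) ω = Bf K r u ω - 4 * π * ω := by
  simp only [Bf, cos_add_two_pi]; ring

lemma Bf_neg_neg (ω u : ℝ) : Bf K r (-u) (-ω) = Bf K r u ω := by
  simp only [Bf, cos_neg]; ring

lemma hasDerivAt_Bf (ω θ : ℝ) :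
    HasDerivAt (fun u => Bf K r u ω) (-2 * (ω - K * r * sin θ)) θ := by
  have h := (((hasDerivAt_cos θ).sub_const 1).const_mul (K * r)).add
    ((hasDerivAt_id θ).const_mul ω) |>.const_mul (-2)
  exact h.congr_deriv (by ring)

lemma contDiff_Bf (ω : ℝ) : ContDiff ℝ ⊤ (fun θ => Bf K r θ ω) := by
  unfold Bf; fun_prop

lemma continuous_exp_Bf (ω : ℝ) : Continuous (fun u => exp (Bf K r u ω)) := by
  unfold Bf; fun_prop

lemma hasDerivAt_primitiveExpBf (ω θ : ℝ) :
    HasDerivAt (primitiveExpBf K r ω) (exp (Bf K r θ ω)) θ :=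
  ((continuous_exp_Bf K r ω).integral_hasStrictDerivAt 0 θ).hasDerivAt

lemma primitiveExpBf_add_two_pi (ω θ : ℝ) :
    primitiveExpBf K r ω (θ + 2 * π) =
      primitiveExpBf K r ω (2 * π) + exp (-(4 * π * ω)) * primitiveExpBf K r ω θ := by
  have hshift : ∫ u in (2 * π)..(θ + 2 * π), exp (Bf K r u ω) =
      exp (-(4 * π * ω)) * primitiveExpBf K r ω θ := by
    have hsub := intervalIntegral.integral_comp_add_right (a := 0) (b := θ)
      (fun u => exp (Bf K r u ω)) (2 * π)
    rw [zero_add] at hsub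
    rw [← hsub, primitiveExpBf, ← intervalIntegral.integral_const_mul]
    refine intervalIntegral.integral_congr fun u _ => ?_
    simp only [Bf_add_two_pi, ← exp_add]; ring_nf
  rw [← hshift]
  unfold primitiveExpBf
  rw [intervalIntegral.integral_add_adjacent_intervals] <;>
    exact (continuous_exp_Bf K r ω).intervalIntegrable _ _

lemma primitiveExpBf_neg_neg (ω θ : ℝ) :
    primitiveExpBf K r (-ω) (-θ) = -primitiveExpBf K r ω θ := by
  simp only [primitiveExpBf]
  rw [← neg_zero, ← intervalIntegral.integral_comp_neg (fun u => exp (Bf K r u (-ω))),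
    intervalIntegral.integral_symm, neg_zero]
  simp only [Bf_neg_neg]

lemma p2_eq (ω θ : ℝ) :
    p2 K r θ ω = exp (-Bf K r θ ω) *
      (exp (4 * π * ω) * primitiveExpBf K r ω (2 * π) / (1 - exp (4 * π * ω)) +
        primitiveExpBf K r ω θ) := by
  simp only [p2, primitiveExpBf, exp_add, exp_sub, intervalIntegral.integral_mul_const,
    intervalIntegral.integral_div, exp_neg]
  ring

lemma hasDerivAt_p2 (ω θ : ℝ) :
    HasDerivAt (fun t => p2 K r t ω) (2 * (ω - K * r * sin θ) * p2 K r θ ω + 1) θ := by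
  simp only [p2_eq]
  refine (((hasDerivAt_Bf K r ω θ).neg.exp).mul
    ((hasDerivAt_primitiveExpBf K r ω θ).const_add _)).congr_deriv ?_
  simp only [Pi.neg_apply, exp_neg]
  field_simp

lemma contDiff_p2 (ω : ℝ) : ContDiff ℝ (⊤ : ℕ∞) (fun θ => p2 K r θ ω) := by
  have hJ : ContDiff ℝ (⊤ : ℕ∞) (primitiveExpBf K r ω) := by
    rw [contDiff_infty_iff_deriv]
    refine ⟨fun t => (hasDerivAt_primitiveExpBf K r ω t).differentiableAt, ?_⟩
    rw [funext fun t => (hasDerivAt_primitiveExpBf K r ω t).deriv]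
    exact (contDiff_Bf K r ω).exp.of_le le_top
  simp only [p2_eq]
  exact ((contDiff_Bf K r ω).neg.exp.of_le le_top).mul (contDiff_const.add hJ)

lemma p2_periodic {ω : ℝ} (hω : ω ≠ 0) : Periodic (fun θ => p2 K r θ ω) (2 * π) := by
  intro θ
  have hE := one_sub_exp_four_pi_mul_ne_zero hω
  simp only [p2_eq, Bf_add_two_pi, primitiveExpBf_add_two_pi, neg_sub, exp_sub, exp_neg]
  field_simp
  ring

lemma p2_neg_neg {ω : ℝ} (hω : ω ≠ 0) (θ : ℝ) : p2 K r (-θ) (-ω) = -p2 K r θ ω := by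
  have hrefl := primitiveExpBf_neg_neg K r ω (-(2 * π))
  have hshift := primitiveExpBf_add_two_pi K r ω (-(2 * π))
  rw [neg_neg] at hrefl
  rw [neg_add_cancel, show primitiveExpBf K r ω 0 = 0 from intervalIntegral.integral_same,
    exp_neg] at hshift
  rw [p2_eq, p2_eq, Bf_neg_neg, primitiveExpBf_neg_neg, hrefl,
    show 4 * π * -ω = -(4 * π * ω) by ring]
  simp only [exp_neg]
  have hE := one_sub_exp_four_pi_mul_ne_zero hω
  have hE0 := (exp_pos (4 * π * ω)).ne'
  have hE' : exp (4 * π * ω) - 1 ≠ 0 := by rw [← neg_sub]; exact neg_ne_zero.2 hE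
  set E := exp (4 * π * ω)
  have hJ : primitiveExpBf K r ω (-(2 * π)) = -E * primitiveExpBf K r ω (2 * π) := by
    field_simp at hshift
    linear_combination -hshift
  rw [hJ]
  field_simp
  ring

lemma G_eq_sub_Bf (u ω : ℝ) : G u ω (2 * K * r) = 2 * K * r - Bf K r u ω := by
  simp only [G, Bf]; ring

lemma S_eq_mul_p2 {ω : ℝ} (hω : ω ≠ 0) (θ : ℝ) :
    S θ ω (2 * K * r) = (1 - exp (4 * π * ω)) * p2 K r θ ω := by
  have hE := one_sub_exp_four_pi_mul_ne_zero hω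
  simp only [S, p2_eq, primitiveExpBf, G_eq_sub_Bf, neg_sub, exp_sub,
    intervalIntegral.integral_div, exp_neg]
  field_simp
  ring

lemma q_eq_mul_p2 {ω : ℝ} (hω : ω ≠ 0) (θ : ℝ) :
    q K r θ ω = (1 - exp (4 * π * ω)) / Z ω (2 * K * r) * p2 K r θ ω := by
  rw [q, S_eq_mul_p2 K r hω, mul_div_right_comm]

lemma Z_eq_mul_integral_p2 {ω : ℝ} (hω : ω ≠ 0) :
    Z ω (2 * K * r) = (1 - exp (4 * π * ω)) * ∫ θ in (0:ℝ)..(2 * π), p2 K r θ ω := by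
  simp only [Z, S_eq_mul_p2 K r hω, intervalIntegral.integral_const_mul]

lemma integral_mul_q_eq_div {ω : ℝ} (hω : ω ≠ 0) (g : ℝ → ℝ) :
    ∫ v in (0:ℝ)..(2 * π), g v * q K r v ω =
      (∫ v in (0:ℝ)..(2 * π), g v * p2 K r v ω) / ∫ v in (0:ℝ)..(2 * π), p2 K r v ω := by
  simp only [q_eq_mul_p2 K r hω, Z_eq_mul_integral_p2 K r hω, mul_left_comm (g _),
    intervalIntegral.integral_const_mul]
  rw [div_mul_eq_mul_div, mul_div_mul_left _ _ (one_sub_exp_four_pi_mul_ne_zero hω)]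

lemma continuous_q {ω : ℝ} (hω : ω ≠ 0) : Continuous (fun θ => q K r θ ω) := by
  simp only [q_eq_mul_p2 K r hω]
  exact continuous_const.mul (contDiff_p2 K r ω).continuous

lemma q_periodic {ω : ℝ} (hω : ω ≠ 0) : Periodic (fun θ => q K r θ ω) (2 * π) := fun θ => by
  simp only [q_eq_mul_p2 K r hω, p2_periodic K r hω θ]

lemma integral_mul_p2_neg {ω : ℝ} (hω : ω ≠ 0) {g : ℝ → ℝ} (hg : Periodic g (2 * π)) :
    ∫ v in (0:ℝ)..(2 * π), g v * p2 K r v (-ω) = -∫ v in (0:ℝ)..(2 * π), g (-v) * p2 K r v ω := by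
  have hper : Periodic (fun v => g (-v) * p2 K r v ω) (2 * π) := fun v => by
    simp only [neg_add, ← sub_eq_add_neg, hg.sub_eq, p2_periodic K r hω v]
  rw [← hper.intervalIntegral_comp_neg, ← intervalIntegral.integral_neg]
  refine intervalIntegral.integral_congr fun v _ => ?_
  rw [neg_neg, ← mul_neg, ← p2_neg_neg K r hω, neg_neg]

lemma Jconv_q_eq {ω₀ : ℝ} (hω₀ : ω₀ ≠ 0) (hfix : r = psiMu ω₀ (2 * K * r)) (u : ℝ) :
    Jconv K ω₀ (q K r) u = -(K * r) * sin u := by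
  have hω₀' : -ω₀ ≠ 0 := neg_ne_zero.2 hω₀
  have hcos : (∫ v in (0:ℝ)..(2 * π), cos v * q K r v (-ω₀)) +
      ∫ v in (0:ℝ)..(2 * π), cos v * q K r v ω₀ = 2 * r := by
    simp only [q, mul_div_assoc', intervalIntegral.integral_div]
    rw [psiMu] at hfix
    linarith
  have hsin : (∫ v in (0:ℝ)..(2 * π), sin v * q K r v (-ω₀)) +
      ∫ v in (0:ℝ)..(2 * π), sin v * q K r v ω₀ = 0 := by
    have hp2 := integral_mul_p2_neg K r hω₀ (g := fun _ => 1) (fun _ => rfl)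
    simp only [integral_mul_q_eq_div K r hω₀, integral_mul_q_eq_div K r hω₀',
      integral_mul_p2_neg K r hω₀ sin_periodic, one_mul] at hp2 ⊢
    simp only [sin_neg, neg_mul, intervalIntegral.integral_neg, neg_neg, hp2, div_neg,
      neg_add_cancel]
  rw [Jconv, (q_periodic K r hω₀').intervalIntegral_sin_mul_comp_sub (continuous_q K r hω₀'),
    (q_periodic K r hω₀).intervalIntegral_sin_mul_comp_sub (continuous_q K r hω₀)]
  linear_combination (-(K / 2) * sin u) * hcos + (K / 2 * cos u) * hsin

lemma Jconv_p2_eq {ω₀ : ℝ} (hω₀ : ω₀ ≠ 0) (u : ℝ) :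
    Jconv K ω₀ (p2 K r) u = (K * ∫ v in (0:ℝ)..(2 * π), sin v * p2 K r v ω₀) * cos u := by
  have hω₀' : -ω₀ ≠ 0 := neg_ne_zero.2 hω₀
  have hcos := integral_mul_p2_neg K r hω₀ cos_periodic
  have hsin := integral_mul_p2_neg K r hω₀ sin_periodic
  simp only [cos_neg, sin_neg, neg_mul, intervalIntegral.integral_neg, neg_neg] at hcos hsin
  rw [Jconv, (p2_periodic K r hω₀').intervalIntegral_sin_mul_comp_sub
      (contDiff_p2 K r (-ω₀)).continuous,
    (p2_periodic K r hω₀).intervalIntegral_sin_mul_comp_sub (contDiff_p2 K r ω₀).continuous,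
    hcos, hsin]
  ring

lemma Lop_p2_eq_mul_eFun {ω₀ ω c : ℝ} (hω : ω ≠ 0)
    (hJq : ∀ u, Jconv K ω₀ (q K r) u = -(K * r) * sin u)
    (hJp : ∀ u, Jconv K ω₀ (p2 K r) u = c * cos u) (θ : ℝ) :
    Lop K ω₀ r (p2 K r) θ ω = c * eFun K r θ ω := by
  have hp2 : Differentiable ℝ (fun t => p2 K r t ω) :=
    fun t => (hasDerivAt_p2 K r ω t).differentiableAt
  have hderiv : deriv (fun t => p2 K r t ω) = fun t => 2 * (ω - K * r * sin t) * p2 K r t ω + 1 :=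
    funext fun t => (hasDerivAt_p2 K r ω t).deriv
  have hderiv_diff : DifferentiableAt ℝ (deriv fun t => p2 K r t ω) θ := by
    rw [hderiv]; fun_prop
  have hq : DifferentiableAt ℝ (fun t => q K r t ω) θ := by
    simp only [q_eq_mul_p2 K r hω]; fun_prop
  have hdrift : (fun u => p2 K r u ω * (Jconv K ω₀ (q K r) u + ω) +
      q K r u ω * Jconv K ω₀ (p2 K r) u) =
      fun u => (deriv (fun t => p2 K r t ω) u - 1) / 2 + c * (q K r u ω * cos u) := by
    funext u
    rw [hJq, hJp, hderiv]
    ring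
  have h : HasDerivAt (fun u => (deriv (fun t => p2 K r t ω) u - 1) / 2 + c * (q K r u ω * cos u))
      (deriv (deriv fun t => p2 K r t ω) θ / 2 +
        c * (deriv (fun t => q K r t ω) θ * cos θ + q K r θ ω * -sin θ)) θ :=
    ((hderiv_diff.hasDerivAt.sub_const 1).div_const 2).add
      ((hq.hasDerivAt.mul (hasDerivAt_cos θ)).const_mul c)
  rw [Lop, hdrift, h.deriv, eFun]
  ring

lemma p2_neg {ω θ : ℝ} (hω : 0 < ω) (hθ : θ ≤ 2 * π) : p2 K r θ ω < 0 := by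
  have hint := (continuous_exp_Bf K r ω).intervalIntegrable (μ := MeasureTheory.volume)
  have hI : 0 < primitiveExpBf K r ω (2 * π) :=
    intervalIntegral.intervalIntegral_pos_of_pos (hint _ _) (fun _ => exp_pos _) (by positivity)
  have hJ : primitiveExpBf K r ω θ ≤ primitiveExpBf K r ω (2 * π) := by
    rw [primitiveExpBf, primitiveExpBf, ← intervalIntegral.integral_add_adjacent_intervals
      (hint 0 θ) (hint θ (2 * π)), le_add_iff_nonneg_right]
    exact intervalIntegral.integral_nonneg hθ fun _ _ => (exp_pos _).le
  have hE : 1 - exp (4 * π * ω) < 0 := sub_neg.2 (one_lt_exp_iff.2 (by positivity))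
  rw [p2_eq]
  refine mul_neg_of_pos_of_neg (exp_pos _) ?_
  calc exp (4 * π * ω) * primitiveExpBf K r ω (2 * π) / (1 - exp (4 * π * ω)) +
        primitiveExpBf K r ω θ
      ≤ exp (4 * π * ω) * primitiveExpBf K r ω (2 * π) / (1 - exp (4 * π * ω)) +
        primitiveExpBf K r ω (2 * π) := by gcongr
    _ = primitiveExpBf K r ω (2 * π) / (1 - exp (4 * π * ω)) := by field_simp [hE.ne]; ring
    _ < 0 := div_neg_of_pos_of_neg hI hE

lemma p2_ne_zero {ω θ : ℝ} (hω : 0 < ω) (hθ : θ ∈ Set.uIcc 0 (2 * π)) : p2 K r θ ω ≠ 0 :=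
  (p2_neg K r hω (Set.uIcc_of_le (by positivity : (0:ℝ) ≤ 2 * π) ▸ hθ).2).ne

lemma continuousOn_inv_p2 {ω : ℝ} (hω : 0 < ω) :
    ContinuousOn (fun θ => (p2 K r θ ω)⁻¹) (Set.uIcc 0 (2 * π)) :=
  (contDiff_p2 K r ω).continuous.continuousOn.inv₀ fun _ => p2_ne_zero K r hω

lemma mul_integral_sin_mul_p2 {ω : ℝ} (hω : ω ≠ 0) :
    K * r * ∫ θ in (0:ℝ)..(2 * π), sin θ * p2 K r θ ω =
      ω * (∫ θ in (0:ℝ)..(2 * π), p2 K r θ ω) + π := by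
  have hp2 := (contDiff_p2 K r ω).continuous
  have hFTC : ∫ θ in (0:ℝ)..(2 * π), (2 * (ω - K * r * sin θ) * p2 K r θ ω + 1) = 0 := by
    rw [intervalIntegral.integral_eq_sub_of_hasDerivAt (fun θ _ => hasDerivAt_p2 K r ω θ)
      ((by fun_prop : Continuous fun θ => 2 * (ω - K * r * sin θ) * p2 K r θ ω + 1)
        |>.intervalIntegrable _ _), ← zero_add (2 * π), sub_eq_zero]
    exact p2_periodic K r hω 0
  have hsplit : ∫ θ in (0:ℝ)..(2 * π), (2 * (ω - K * r * sin θ) * p2 K r θ ω + 1) =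
      2 * ω * (∫ θ in (0:ℝ)..(2 * π), p2 K r θ ω) -
        2 * (K * r) * (∫ θ in (0:ℝ)..(2 * π), sin θ * p2 K r θ ω) + 2 * π := by
    calc ∫ θ in (0:ℝ)..(2 * π), (2 * (ω - K * r * sin θ) * p2 K r θ ω + 1)
        = ∫ θ in (0:ℝ)..(2 * π),
            (2 * ω * p2 K r θ ω - 2 * (K * r) * (sin θ * p2 K r θ ω) + 1) :=
          intervalIntegral.integral_congr fun θ _ => by ring
      _ = _ := by
          rw [intervalIntegral.integral_add, intervalIntegral.integral_sub,
            intervalIntegral.integral_const_mul, intervalIntegral.integral_const_mul,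
            intervalIntegral.integral_const, smul_eq_mul, sub_zero, mul_one]
          all_goals exact (by fun_prop : Continuous _).intervalIntegrable _ _
  linarith

lemma integral_inv_p2 {ω : ℝ} (hω : 0 < ω) :
    ∫ θ in (0:ℝ)..(2 * π), (p2 K r θ ω)⁻¹ = -(4 * π * ω) := by
  have hinv := continuousOn_inv_p2 K r hω
  have hdrift : Continuous fun θ => 2 * (ω - K * r * sin θ) := by fun_prop
  have hFTC : ∫ θ in (0:ℝ)..(2 * π), (2 * (ω - K * r * sin θ) + (p2 K r θ ω)⁻¹) = 0 := by
    rw [intervalIntegral.integral_eq_sub_of_hasDerivAt (f := fun θ => log (p2 K r θ ω))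
      (f' := fun θ => 2 * (ω - K * r * sin θ) + (p2 K r θ ω)⁻¹)
      (fun θ hθ => ((hasDerivAt_p2 K r ω θ).log (p2_ne_zero K r hω hθ)).congr_deriv
        (by field_simp [p2_ne_zero K r hω hθ]))
      (hdrift.continuousOn.add hinv).intervalIntegrable, ← zero_add (2 * π), sub_eq_zero]
    exact congrArg log (p2_periodic K r hω.ne' 0)
  rw [intervalIntegral.integral_add (hdrift.intervalIntegrable _ _) hinv.intervalIntegrable,
    intervalIntegral.integral_const_mul, intervalIntegral.integral_sub intervalIntegrable_const
      ((by fun_prop : Continuous fun θ => K * r * sin θ).intervalIntegrable _ _),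
    intervalIntegral.integral_const_mul, integral_sin] at hFTC
  simp only [intervalIntegral.integral_const, smul_eq_mul, cos_two_pi, cos_zero] at hFTC
  linarith

lemma exists_p2_ne (hKr : K * r ≠ 0) (ω a : ℝ) : ∃ θ ∈ Set.Icc 0 (2 * π), p2 K r θ ω ≠ a := by
  by_contra! hconst
  have hode : ∀ θ ∈ Set.Ioo 0 (2 * π), 2 * (ω - K * r * sin θ) * a + 1 = 0 := fun θ hθ => by
    have hloc : (fun t => p2 K r t ω) =ᶠ[nhds θ] fun _ => a :=
      Filter.mem_of_superset (Icc_mem_nhds hθ.1 hθ.2) fun t ht => hconst t ht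
    rw [← hconst θ (Set.Ioo_subset_Icc_self hθ)]
    exact (hasDerivAt_p2 K r ω θ).unique ((hasDerivAt_const θ a).congr_of_eventuallyEq hloc)
  have h1 := hode (π / 2) ⟨by positivity, by linarith [pi_pos]⟩
  have h2 := hode (3 * π / 2) ⟨by positivity, by linarith [pi_pos]⟩
  rw [sin_pi_div_two] at h1
  rw [show 3 * π / 2 = π / 2 + π by ring, sin_add_pi, sin_pi_div_two] at h2
  have ha : a = 0 := by
    have : 4 * (K * r) * a = 0 := by linear_combination h2 - h1
    simpa [hKr] using this
  rw [ha] at h1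
  norm_num at h1

lemma mul_integral_p2_lt {ω : ℝ} (hω : 0 < ω) (hKr : K * r ≠ 0) :
    ω * ∫ θ in (0:ℝ)..(2 * π), p2 K r θ ω < -π := by
  have h2π : (0:ℝ) < 2 * π := by positivity
  have hp2 := (contDiff_p2 K r ω).continuous
  have hinv := continuousOn_inv_p2 K r hω
  rw [Set.uIcc_of_le h2π.le] at hinv
  have hAMGM : 0 < ∫ θ in (0:ℝ)..(2 * π), (p2 K r θ ω + 1 / (2 * ω)) ^ 2 * -(p2 K r θ ω)⁻¹ := by
    obtain ⟨θ₀, hθ₀, hne⟩ := exists_p2_ne K r hKr ω (-(1 / (2 * ω)))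
    refine intervalIntegral.integral_pos h2π ((by fun_prop : Continuous fun θ =>
      (p2 K r θ ω + 1 / (2 * ω)) ^ 2).continuousOn.mul hinv.neg)
      (fun θ hθ => mul_nonneg (sq_nonneg _) ?_) ⟨θ₀, hθ₀, mul_pos ?_ ?_⟩
    · exact neg_nonneg.2 (inv_nonpos.2 (p2_neg K r hω hθ.2).le)
    · exact sq_pos_of_ne_zero fun h => hne (eq_neg_of_add_eq_zero_left h)
    · exact neg_pos.2 (inv_lt_zero'.2 (p2_neg K r hω hθ₀.2))
  have hexpand : ∫ θ in (0:ℝ)..(2 * π), (p2 K r θ ω + 1 / (2 * ω)) ^ 2 * -(p2 K r θ ω)⁻¹ =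
      -(∫ θ in (0:ℝ)..(2 * π), p2 K r θ ω) - 2 * π / ω -
        (4 * ω ^ 2)⁻¹ * ∫ θ in (0:ℝ)..(2 * π), (p2 K r θ ω)⁻¹ := by
    rw [intervalIntegral.integral_congr (g := fun θ =>
        -p2 K r θ ω - 1 / ω - (4 * ω ^ 2)⁻¹ * (p2 K r θ ω)⁻¹) fun θ hθ => by
          have := p2_ne_zero K r hω hθ
          field_simp
          ring,
      intervalIntegral.integral_sub, intervalIntegral.integral_sub, intervalIntegral.integral_neg,
      intervalIntegral.integral_const, intervalIntegral.integral_const_mul]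
    · simp only [smul_eq_mul, sub_zero]
      ring
    all_goals first
      | exact hinv.intervalIntegrable_of_Icc h2π.le |>.const_mul _
      | exact (by fun_prop : Continuous _).intervalIntegrable _ _
  rw [hexpand, integral_inv_p2 K r hω] at hAMGM
  have : (∫ θ in (0:ℝ)..(2 * π), p2 K r θ ω) < -π / ω := by
    field_simp at hAMGM ⊢
    linarith
  rwa [lt_div_iff₀ hω, mul_comm] at this

lemma mul_integral_sin_mul_p2_neg {ω : ℝ} (hω : 0 < ω) (hKr : K * r ≠ 0) :
    K * r * ∫ θ in (0:ℝ)..(2 * π), sin θ * p2 K r θ ω < 0 := by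
  rw [mul_integral_sin_mul_p2 K r hω.ne']
  linarith [mul_integral_p2_lt K r hω hKr]

end Profile

/-- The explicit function is `2π`-periodic and smooth in `θ`, and its image under `L` is a
nonzero multiple of `e`. -/
theorem stmt8 (K ω₀ r : ℝ) (hK : 0 < K) (hω₀ : 0 < ω₀) (hr : 0 < r)
    (hfix : r = psiMu ω₀ (2 * K * r)) :
    (∀ ω ∈ ({-ω₀, ω₀} : Set ℝ),
        Function.Periodic (fun θ => p2 K r θ ω) (2 * Real.pi) ∧
          ContDiff ℝ (⊤ : ℕ∞) (fun θ => p2 K r θ ω)) ∧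
      ∃ c : ℝ, c ≠ 0 ∧
        ∀ θ : ℝ, ∀ ω ∈ ({-ω₀, ω₀} : Set ℝ),
          Lop K ω₀ r (p2 K r) θ ω = c * eFun K r θ ω := by
  have hne : ∀ ω ∈ ({-ω₀, ω₀} : Set ℝ), ω ≠ 0 := by
    rintro ω (rfl | rfl) <;> simp [hω₀.ne']
  have hc := mul_integral_sin_mul_p2_neg K r hω₀ (mul_pos hK hr).ne'
  refine ⟨fun ω hω => ⟨p2_periodic K r (hne ω hω), contDiff_p2 K r ω⟩,
    K * ∫ θ in (0:ℝ)..(2 * π), sin θ * p2 K r θ ω₀,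
    mul_ne_zero hK.ne' (right_ne_zero_of_mul hc.ne), fun θ ω hω => ?_⟩
  exact Lop_p2_eq_mul_eFun K r (hne ω hω) (Jconv_q_eq K r hω₀.ne' hfix) (Jconv_p2_eq K r hω₀.ne') θ
end
end
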